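/- Let A be a finite-dimensional algebra. If a module N satisfies Ext^i(N,A) = 0 for i = 1,...,n and Ω^n(N) ≅ N for some n ≥ 1, then N is Gorenstein-projective. -/

import Mathlib

open CategoryTheory

/-- `Ext^i(M,N) ≠ 0` for modules over a ring `R`. -/
def extNZ (R : Type) [Ring R] (M N : ModuleCat.{0} R) (i : ℕ) : Prop :=
  Nontrivial (((Ext ℤ (ModuleCat.{0} R) i).obj (Opposite.op M)).obj N)

/-- `inf { r ≥ 1 | Ext^r(M,N) ≠ 0 }` as an element of `ℕ∞` (`⊤` if all vanish). -/
noncomputable def minExtNZ (R : Type) [Ring R] (M N : ModuleCat.{0} R) : ℕ∞ :=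
  sInf {x : ℕ∞ | ∃ r : ℕ, x = r ∧ 1 ≤ r ∧ extNZ R M N r}

/-- `domdim M ≥ n`: there is an exact sequence `0 → M → I_0 → ⋯ → I_{n-1}`
with all `I_j` injective and projective. -/
def domdimGE (R : Type) [Ring R] : ℕ → ModuleCat.{0} R → Prop
  | 0, _ => True
  | n+1, M => ∃ (I : ModuleCat.{0} R) (f : M ⟶ I), CategoryTheory.Injective I ∧
      CategoryTheory.Projective I ∧ Mono f ∧ domdimGE R n (Limits.cokernel f)

/-- The dominant dimension of a module, as an element of `ℕ∞`. -/
noncomputable def domdimEN (R : Type) [Ring R] (M : ModuleCat.{0} R) : ℕ∞ :=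
  sSup {x : ℕ∞ | ∃ n : ℕ, x = n ∧ domdimGE R n M}

/-- `injdim M ≤ n`. -/
def injdimLE (R : Type) [Ring R] : ℕ → ModuleCat.{0} R → Prop
  | 0, M => CategoryTheory.Injective M
  | n+1, M => ∃ (I : ModuleCat.{0} R) (f : M ⟶ I), CategoryTheory.Injective I ∧ Mono f ∧
      injdimLE R n (Limits.cokernel f)

/-- `projdim M ≤ n`. -/
def projdimLE (R : Type) [Ring R] : ℕ → ModuleCat.{0} R → Prop
  | 0, M => CategoryTheory.Projective M
  | n+1, M => ∃ (P : ModuleCat.{0} R) (f : P ⟶ M), CategoryTheory.Projective P ∧ Epi f ∧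
      projdimLE R n (Limits.kernel f)

/-- A module is Gorenstein projective if it is the kernel of `d⁰` in a totally acyclic
complex of projective modules. -/
def IsGorensteinProjective (R : Type) [Ring R] (M : ModuleCat.{0} R) : Prop :=
  ∃ (P : ℤ → ModuleCat.{0} R) (d : ∀ i : ℤ, P i ⟶ P (i+1)),
    (∀ i, CategoryTheory.Projective (P i)) ∧
    (∀ i, Function.Exact (d i) (d (i+1))) ∧
    (∀ (i : ℤ) (φ : P (i+1) ⟶ ModuleCat.of R R), d i ≫ φ = 0 →
        ∃ ψ : P (i+1+1) ⟶ ModuleCat.of R R, φ = d (i+1) ≫ ψ) ∧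
    Nonempty (M ≅ ModuleCat.of R (LinearMap.ker (d 0).hom))

/-- `S` is a (first) syzygy of `M`: kernel of a projective cover `P → M`. -/
def IsSyzygy (R : Type) [Ring R] (S M : ModuleCat.{0} R) : Prop :=
  ∃ (P : ModuleCat.{0} R) (f : P ⟶ M), CategoryTheory.Projective P ∧
    Function.Surjective f ∧
    (∀ L : Submodule R P, L ⊔ LinearMap.ker f.hom = ⊤ → L = ⊤) ∧
    Nonempty (S ≅ ModuleCat.of R (LinearMap.ker f.hom))

/-- `S` is an `n`-th syzygy of `M`. -/
def IsNthSyzygy (R : Type) [Ring R] : ℕ → ModuleCat.{0} R → ModuleCat.{0} R → Prop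
  | 0, S, M => Nonempty (S ≅ M)
  | n+1, S, M => ∃ T : ModuleCat.{0} R, IsSyzygy R T M ∧ IsNthSyzygy R n S T

/-- An indecomposable module. -/
def IndecM (R : Type) [Ring R] (M : ModuleCat.{0} R) : Prop :=
  Nontrivial M ∧ ∀ N N' : Submodule R M, IsCompl N N' → N = ⊤ ∨ N' = ⊤

section AuxGP
variable {A : Type} [Ring A]

def pCast {P : ℕ → ModuleCat.{0} A} {a b : ℕ} (h : a = b) : P a ⟶ P b :=
  eqToHom (congrArg P h)

@[simp] lemma pCast_rfl {P : ℕ → ModuleCat.{0} A} {a : ℕ} (x : P a) :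
    pCast (P := P) (rfl : a = a) x = x := by simp [pCast]

@[simp] lemma pCast_symm_pCast {P : ℕ → ModuleCat.{0} A} {a b : ℕ} (h : a = b) (x : P b) :
    pCast (P := P) h (pCast (P := P) h.symm x) = x := by subst h; simp

@[simp] lemma pCast_pCast_symm {P : ℕ → ModuleCat.{0} A} {a b : ℕ} (h : a = b) (x : P a) :
    pCast (P := P) h.symm (pCast (P := P) h x) = x := by subst h; simp

@[simp] lemma pCast_eq_zero_iff {P : ℕ → ModuleCat.{0} A} {a b : ℕ} (h : a = b) (x : P a) :
    pCast (P := P) h x = 0 ↔ x = 0 := by subst h; simp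

@[simp] lemma pCast_mem_iff {P : ℕ → ModuleCat.{0} A} {K : ∀ k, Submodule A (P k)}
    {a b : ℕ} (h : a = b) (x : P a) :
    pCast (P := P) h x ∈ K b ↔ x ∈ K a := by subst h; simp

lemma gp_main (m : ℕ) (N : ModuleCat.{0} A)
    (P : ℕ → ModuleCat.{0} A) (K : ∀ k, Submodule A (P k))
    (hproj : ∀ k, k < m+1 → Projective (P k))
    (G : ∀ k, P k ⟶ P ((k + m) % (m+1)))
    (hker : ∀ k, k < m+1 → ∀ x, G k x = 0 ↔ x ∈ K k)
    (hrange : ∀ k, k < m+1 → ∀ y, y ∈ K ((k + m) % (m+1)) ↔ ∃ x, G k x = y)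
    (p : P 0 ⟶ N) (hps : Function.Surjective p) (hpk : ∀ x, p x = 0 ↔ x ∈ K 0)
    (ν : N ≅ ModuleCat.of A (K m))
    (hext : ∀ i, 1 ≤ i → i ≤ m+1 → ¬ extNZ A N (ModuleCat.of A A) i) :
    IsGorensteinProjective A N := by
  classical
  have hnpos : 0 < m + 1 := Nat.succ_pos m
  have hlt : ∀ j : ℕ, j % (m+1) < m+1 := fun j => Nat.mod_lt _ hnpos
  have hp : ∀ j : ℕ, ((j+1) % (m+1) + m) % (m+1) = j % (m+1) := by
    intro j
    rw [Nat.mod_add_mod, show j+1+m = j + (m+1) by omega, Nat.add_mod_right]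
  -- squares
  have sq : ∀ j : ℕ, (G ((j+1+1) % (m+1)) ≫ pCast (hp (j+1))) ≫ (G ((j+1) % (m+1)) ≫ pCast (hp j)) = 0 := by
    intro j
    ext x
    have h1 : G ((j+1+1) % (m+1)) x ∈ K (((j+1+1) % (m+1) + m) % (m+1)) :=
      (hrange _ (hlt _) _).mpr ⟨x, rfl⟩
    have h2 : pCast (P := P) (hp (j+1)) (G ((j+1+1) % (m+1)) x) ∈ K ((j+1) % (m+1)) :=
      (pCast_mem_iff _ _).mpr h1
    have h3 : G ((j+1) % (m+1)) (pCast (P := P) (hp (j+1)) (G ((j+1+1) % (m+1)) x)) = 0 :=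
      (hker _ (hlt _) _).mpr h2
    show pCast (P := P) (hp j) (G ((j+1) % (m+1)) (pCast (P := P) (hp (j+1)) (G ((j+1+1) % (m+1)) x))) = 0
    rw [h3, map_zero]
  set R : ChainComplex (ModuleCat.{0} A) ℕ :=
    ChainComplex.of (fun j => P (j % (m+1))) (fun j => G ((j+1) % (m+1)) ≫ pCast (hp j)) sq with hR
  have hd : ∀ j : ℕ, R.d (j+1) j = G ((j+1) % (m+1)) ≫ pCast (hp j) := fun j =>
    by exact ChainComplex.of_d (fun j => P (j % (m+1))) (fun j => G ((j+1) % (m+1)) ≫ pCast (hp j)) j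
  have hdapp : ∀ (j : ℕ) (x : P ((j+1) % (m+1))),
      R.d (j+1) j x = pCast (P := P) (hp j) (G ((j+1) % (m+1)) x) := by
    intro j x; rw [hd]; rfl
  -- augmentation
  have hz : (0 : ℕ) % (m+1) = 0 := Nat.zero_mod _
  set π0 : R.X 0 ⟶ N := pCast hz ≫ p with hπ0
  have w : R.d 1 0 ≫ π0 = 0 := by
    ext x
    show π0 (R.d 1 0 x) = 0
    rw [hdapp 0 x]
    show p (pCast (P := P) hz (pCast (P := P) (hp 0) (G (1 % (m+1)) x))) = 0
    rw [hpk]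
    rw [pCast_mem_iff, pCast_mem_iff]
    exact (hrange _ (hlt _) _).mpr ⟨x, rfl⟩
  set π : R ⟶ (ChainComplex.single₀ (ModuleCat.{0} A)).obj N :=
    (ChainComplex.toSingle₀Equiv R N).symm ⟨π0, w⟩ with hπdef
  -- exactness of R in positive degrees
  have hexact : ∀ j : ℕ, R.ExactAt (j+1) := by
    intro j
    rw [HomologicalComplex.exactAt_iff' R (j+1+1) (j+1) j (by simp) (by simp)]
    rw [ShortComplex.moduleCat_exact_iff]
    show ∀ x : P ((j+1) % (m+1)), R.d (j+1) j x = 0 →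
      ∃ y : P ((j+1+1) % (m+1)), R.d (j+1+1) (j+1) y = x
    intro x hx
    have hx' : G ((j+1) % (m+1)) x = 0 := by
      rw [hdapp j x, pCast_eq_zero_iff] at hx
      exact hx
    have hxK : x ∈ K ((j+1) % (m+1)) := (hker _ (hlt _) _).mp hx'
    have hxK' : pCast (P := P) (hp (j+1)).symm x ∈ K (((j+1+1) % (m+1) + m) % (m+1)) := by
      rw [pCast_mem_iff (K := K)]   -- careful direction
      exact hxK
    obtain ⟨y, hy⟩ := (hrange _ (hlt (j+1+1)) _).mp hxK'
    refine ⟨y, ?_⟩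
    show R.d (j+1+1) (j+1) y = x
    rw [hdapp (j+1) y, hy, pCast_symm_pCast]
  -- the projective resolution
  have hResEx : ∃ Res : ProjectiveResolution N, Res.complex = R := by
    refine ⟨{ complex := R
              projective := fun j => hproj _ (hlt j)
              π := π
              quasiIso := ?_ }, rfl⟩
    constructor
    intro i
    cases i with
    | zero =>
      rw [ChainComplex.quasiIsoAt₀_iff, ShortComplex.quasiIso_iff_of_zeros']
      · refine (ShortComplex.exact_and_epi_g_iff_of_iso
          (S₁ := ShortComplex.mk (R.d 1 0) π0 w) ?_).1 ⟨?_, ?_⟩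
        · exact ShortComplex.isoMk (Iso.refl _) (Iso.refl _) (Iso.refl _) (by exact (Category.id_comp _).trans (Category.comp_id _).symm)
            (by simp [hπdef]; exact (Category.id_comp _).trans (Category.comp_id _).symm)
        · rw [ShortComplex.moduleCat_exact_iff]
          show ∀ x : P (0 % (m+1)), π0 x = 0 → ∃ y : P (1 % (m+1)), R.d 1 0 y = x
          intro x hx
          have hxK : x ∈ K (0 % (m+1)) := by
            rw [hπ0] at hx
            have : p (pCast (P := P) hz x) = 0 := hx
            rw [hpk, pCast_mem_iff (K := K)] at this
            exact this
          have hxK' : pCast (P := P) (hp 0).symm x ∈ K ((1 % (m+1) + m) % (m+1)) := by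
            rw [pCast_mem_iff (K := K)]
            exact hxK
          obtain ⟨y, hy⟩ := (hrange _ (hlt 1) _).mp hxK'
          refine ⟨y, ?_⟩
          show R.d 1 0 y = x
          rw [hdapp 0 y, hy, pCast_symm_pCast]
        · rw [ModuleCat.epi_iff_surjective]
          intro z
          obtain ⟨y, hy⟩ := hps z
          refine ⟨pCast (P := P) hz.symm y, ?_⟩
          show p (pCast (P := P) hz (pCast (P := P) hz.symm y)) = z
          rw [pCast_symm_pCast]
          exact hy
      · rfl
      · rfl
      · rfl
    | succ j =>
      rw [quasiIsoAt_iff_exactAt']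
      · exact hexact j
      · apply ChainComplex.exactAt_succ_single_obj
  obtain ⟨Res, hRes⟩ := hResEx
  have hCex : ∀ i, 1 ≤ i → i ≤ m+1 →
      (R.linearYonedaObj ℤ (ModuleCat.of A A)).ExactAt i := by
    intro i h1 h2
    have hns := hext i h1 h2
    rw [extNZ] at hns
    have hsub := not_nontrivial_iff_subsingleton.mp hns
    have hz0 : Limits.IsZero (((Ext ℤ (ModuleCat.{0} A) i).obj (Opposite.op N)).obj
        (ModuleCat.of A A)) := ModuleCat.isZero_of_subsingleton _
    have e := Res.isoExt (R := ℤ) i (ModuleCat.of A A)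
    rw [hRes] at e
    rw [HomologicalComplex.exactAt_iff_isZero_homology]
    exact Limits.IsZero.of_iso hz0 e.symm
  have LIFT : ∀ k, k < m+1 → ∀ φ : P k ⟶ ModuleCat.of A A, (∀ x ∈ K k, φ x = 0) →
      ∃ ψ : P ((k + m) % (m+1)) ⟶ ModuleCat.of A A, ∀ x, φ x = ψ (G k x) := by
    intro k hk
    obtain ⟨i, hi1, hi2, hik⟩ : ∃ i : ℕ, 1 ≤ i ∧ i ≤ m+1 ∧ i % (m+1) = k := by
      rcases Nat.eq_zero_or_pos k with hk0 | hk0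
      · exact ⟨m+1, by omega, le_refl _, by rw [Nat.mod_self, hk0]⟩
      · exact ⟨k, hk0, by omega, Nat.mod_eq_of_lt hk⟩
    subst hik
    obtain ⟨j, rfl⟩ : ∃ j, i = j + 1 := ⟨i - 1, by omega⟩
    intro φ hφ
    have hC := hCex (j+1) hi1 hi2
    rw [HomologicalComplex.exactAt_iff'
      (R.linearYonedaObj ℤ (ModuleCat.of A A)) j (j+1) (j+1+1) (by simp) (by simp)] at hC
    rw [ShortComplex.moduleCat_exact_iff] at hC
    have hC' : ∀ φ' : R.X (j+1) ⟶ ModuleCat.of A A, (R.d (j+1+1) (j+1) ≫ φ' = 0) →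
        ∃ ψ' : R.X j ⟶ ModuleCat.of A A, R.d (j+1) j ≫ ψ' = φ' := hC
    have hg : R.d (j+1+1) (j+1) ≫ φ = 0 := by
      ext x
      show φ (R.d (j+1+1) (j+1) x) = 0
      rw [hdapp (j+1) x]
      apply hφ
      rw [pCast_mem_iff (K := K)]
      exact (hrange _ (hlt _) _).mpr ⟨x, rfl⟩
    obtain ⟨ψ', hψ'⟩ := hC' φ hg
    refine ⟨pCast (P := P) (hp j) ≫ ψ', fun x => ?_⟩
    calc φ x = ψ' (R.d (j+1) j x) := by rw [← hψ']; rfl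
    _ = ψ' (pCast (P := P) (hp j) (G ((j+1) % (m+1)) x)) := by rw [hdapp]
    _ = (pCast (P := P) (hp j) ≫ ψ') (G ((j+1) % (m+1)) x) := rfl
  -- the Z-indexed periodic complex
  have hrnn : ∀ i : ℤ, 0 ≤ ((m : ℤ) - i) % ((m : ℤ)+1) :=
    fun i => Int.emod_nonneg _ (by omega)
  have hrlt' : ∀ i : ℤ, ((m : ℤ) - i) % ((m : ℤ)+1) < (m : ℤ)+1 :=
    fun i => Int.emod_lt_of_pos _ (by omega)
  set r : ℤ → ℕ := fun i => (((m : ℤ) - i) % ((m : ℤ)+1)).toNat with hr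
  have hrlt : ∀ i : ℤ, r i < m+1 := by
    intro i
    have h1 := hrnn i
    have h2 := hrlt' i
    simp only [hr]
    omega
  have hrsucc : ∀ i : ℤ, (r i + m) % (m+1) = r (i+1) := by
    intro i
    have h1 := hrnn i
    have h2 := hrnn (i+1)
    have key : (((m : ℤ) - i) % ((m : ℤ)+1) + m) % ((m:ℤ)+1)
        = ((m : ℤ) - (i+1)) % ((m : ℤ)+1) := by
      rw [Int.emod_add_emod]
      rw [show (m : ℤ) - i + m = ((m : ℤ) - (i+1)) + ((m:ℤ)+1) * 1 by ring]
      rw [Int.add_mul_emod_self_left]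
    have : ((r i + m) % (m+1) : ℤ) = ((r (i+1) : ℕ) : ℤ) := by
      push_cast
      rw [Int.toNat_of_nonneg h1, Int.toNat_of_nonneg h2]
      exact key
    exact_mod_cast this
  have hr0 : r 0 = m := by
    have : ((m : ℤ) - 0) % ((m:ℤ)+1) = (m : ℤ) := by
      rw [sub_zero]; exact Int.emod_eq_of_lt (by omega) (by omega)
    simp only [hr, this]
    omega
  refine ⟨fun i => P (r i), fun i => G (r i) ≫ pCast (hrsucc i),
    fun i => hproj _ (hrlt i), ?_, ?_, ?_⟩
  · -- exactness
    intro i y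
    constructor
    · intro hy
      have hy' : G (r (i+1)) y = 0 := by
        have h0 : pCast (P := P) (hrsucc (i+1)) (G (r (i+1)) y) = 0 := hy
        rwa [pCast_eq_zero_iff] at h0
      have hyK : y ∈ K (r (i+1)) := (hker _ (hrlt _) _).mp hy'
      have hyK' : pCast (P := P) (hrsucc i).symm y ∈ K ((r i + m) % (m+1)) := by
        rw [pCast_mem_iff (K := K)]
        exact hyK
      obtain ⟨x, hx⟩ := (hrange _ (hrlt i) _).mp hyK'
      refine ⟨x, ?_⟩
      show pCast (P := P) (hrsucc i) (G (r i) x) = y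
      rw [hx, pCast_symm_pCast]
    · rintro ⟨x, rfl⟩
      show pCast (P := P) (hrsucc (i+1))
        (G (r (i+1)) (pCast (P := P) (hrsucc i) (G (r i) x))) = 0
      have h1 : G (r i) x ∈ K ((r i + m) % (m+1)) := (hrange _ (hrlt i) _).mpr ⟨x, rfl⟩
      have h2 : pCast (P := P) (hrsucc i) (G (r i) x) ∈ K (r (i+1)) :=
        (pCast_mem_iff _ _).mpr h1
      rw [(hker _ (hrlt _) _).mpr h2, map_zero]
  · -- lifting
    intro i φ hφ
    have happ : ∀ x, φ (pCast (P := P) (hrsucc i) (G (r i) x)) = 0 :=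
      fun x => LinearMap.congr_fun (congrArg ModuleCat.Hom.hom hφ) x
    have hφ' : ∀ y ∈ K (r (i+1)), φ y = 0 := by
      intro y hy
      have hyK' : pCast (P := P) (hrsucc i).symm y ∈ K ((r i + m) % (m+1)) := by
        rw [pCast_mem_iff (K := K)]
        exact hy
      obtain ⟨x, hx⟩ := (hrange _ (hrlt i) _).mp hyK'
      have : pCast (P := P) (hrsucc i) (G (r i) x) = y := by rw [hx, pCast_symm_pCast]
      rw [← this]
      exact happ x
    obtain ⟨ψ₀, hψ₀⟩ := LIFT (r (i+1)) (hrlt _) φ hφ'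
    refine ⟨pCast (P := P) (hrsucc (i+1)).symm ≫ ψ₀, ?_⟩
    ext x
    show φ x = ψ₀ (pCast (P := P) (hrsucc (i+1)).symm
      (pCast (P := P) (hrsucc (i+1)) (G (r (i+1)) x)))
    rw [pCast_pCast_symm]
    exact hψ₀ x
  · -- the kernel iso
    have hker0 : LinearMap.ker (G (r 0) ≫ pCast (P := P) (hrsucc 0)).hom = K (r 0) := by
      ext x
      simp only [LinearMap.mem_ker]
      show pCast (P := P) (hrsucc 0) (G (r 0) x) = 0 ↔ x ∈ K (r 0)
      rw [pCast_eq_zero_iff]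
      exact hker _ (hrlt _) x
    exact ⟨ν ≪≫ eqToIso (congrArg (fun k => ModuleCat.of A (K k)) hr0.symm) ≪≫
      (LinearEquiv.ofEq _ _ hker0.symm).toModuleIso⟩
end AuxGP

section CallerGP
variable {A : Type} [Ring A]

lemma mk_G {X T Z : ModuleCat.{0} A} (fk : X ⟶ T) (hfk : Function.Surjective fk)
    (K' : Submodule A Z) (eiso : T ≅ ModuleCat.of A K') :
    ∃ g : X ⟶ Z, (∀ x, g x = 0 ↔ fk x = 0) ∧ (∀ y, y ∈ K' ↔ ∃ x, g x = y) := by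
  have einj : Function.Injective eiso.hom := (ModuleCat.mono_iff_injective _).mp inferInstance
  refine ⟨fk ≫ eiso.hom ≫ ModuleCat.ofHom K'.subtype, ?_, ?_⟩
  · intro x
    show K'.subtype (eiso.hom (fk x)) = 0 ↔ fk x = 0
    constructor
    · intro h
      apply einj
      rw [map_zero]
      exact Subtype.ext h
    · intro h
      rw [h, map_zero, map_zero]
  · intro y
    constructor
    · intro hy
      obtain ⟨x, hx⟩ := hfk (eiso.inv ⟨y, hy⟩)
      refine ⟨x, ?_⟩
      show K'.subtype (eiso.hom (fk x)) = y
      rw [hx]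
      have h2 : eiso.hom (eiso.inv ⟨y, hy⟩) = ⟨y, hy⟩ := LinearMap.congr_fun (congrArg ModuleCat.Hom.hom eiso.inv_hom_id) _
      rw [h2]
      rfl
    · rintro ⟨x, rfl⟩
      exact SetLike.coe_mem _

lemma syzygy_chain (n : ℕ) (S M : ModuleCat.{0} A) (h : IsNthSyzygy A n S M) :
    ∃ (P Mo : ℕ → ModuleCat.{0} A) (f : ∀ k, P k ⟶ Mo k),
      Nonempty (Mo 0 ≅ M) ∧ Nonempty (S ≅ Mo n) ∧
      ∀ k, k < n → (Projective (P k) ∧ Function.Surjective (f k) ∧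
        Nonempty (Mo (k+1) ≅ ModuleCat.of A (LinearMap.ker (f k).hom))) := by
  induction n generalizing M with
  | zero =>
    exact ⟨fun _ => M, fun _ => M, fun _ => 𝟙 M, ⟨Iso.refl M⟩, h, fun k hk => by omega⟩
  | succ n ih =>
    obtain ⟨T, ⟨P₀, f₀, hproj, hsurj, -, he⟩, hrest⟩ := h
    obtain ⟨P', Mo', f', ⟨h0'⟩, hS', hk'⟩ := ih T hrest
    refine ⟨fun k => Nat.casesOn k P₀ P', fun k => Nat.casesOn k M Mo',
      fun k => Nat.casesOn (motive := fun k =>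
        (Nat.casesOn k P₀ P' : ModuleCat.{0} A) ⟶ (Nat.casesOn k M Mo' : ModuleCat.{0} A))
        k f₀ f', ⟨Iso.refl M⟩, hS', ?_⟩
    rintro (_ | k) hk
    · exact ⟨hproj, hsurj, ⟨h0' ≪≫ he.some⟩⟩
    · exact hk' k (by omega)

theorem stmt2' (N : ModuleCat.{0} A) (n : ℕ) (hn : 1 ≤ n)
    (hext : ∀ i, 1 ≤ i → i ≤ n → ¬ extNZ A N (ModuleCat.of A A) i)
    (hsyz : IsNthSyzygy A n N N) :
    IsGorensteinProjective A N := by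
  classical
  obtain ⟨m, rfl⟩ : ∃ m, n = m + 1 := ⟨n - 1, by omega⟩
  obtain ⟨P, Mo, f, ⟨iso0⟩, ⟨isoN⟩, hchain⟩ := syzygy_chain (m+1) N N hsyz
  have e : ∀ k, k < m+1 → (Mo (k+1) ≅ ModuleCat.of A (LinearMap.ker (f k).hom)) :=
    fun k hk => ((hchain k hk).2.2).some
  have hprevS : ∀ k, k < m+1 → k = (k+1+m) % (m+1) := fun k hk => by
    rw [show k+1+m = k + (m+1) by omega, Nat.add_mod_right, Nat.mod_eq_of_lt hk]
  have hprev0 : m = (0+m) % (m+1) := by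
    rw [Nat.zero_add, Nat.mod_eq_of_lt (by omega)]
  have hGex : ∀ k, ∃ g : P k ⟶ P ((k+m) % (m+1)),
      k < m+1 → ((∀ x, g x = 0 ↔ x ∈ LinearMap.ker (f k).hom) ∧
        (∀ y, y ∈ LinearMap.ker (f ((k+m) % (m+1))).hom ↔ ∃ x, g x = y)) := by
    intro k
    by_cases hk : k < m+1
    · cases k with
      | zero =>
        obtain ⟨g, hg1, hg2⟩ := mk_G (f 0) (hchain 0 (by omega)).2.1
          (LinearMap.ker (f m).hom) (iso0 ≪≫ isoN ≪≫ e m (by omega))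
        refine ⟨g ≫ pCast (P := P) hprev0, fun _ => ⟨?_, ?_⟩⟩
        · intro x
          show pCast (P := P) hprev0 (g x) = 0 ↔ _
          rw [pCast_eq_zero_iff, hg1]
          exact Iff.rfl
        · intro y
          constructor
          · intro hyy
            obtain ⟨x, hx⟩ := (hg2 (pCast (P := P) hprev0.symm y)).mp
              ((pCast_mem_iff (K := fun k => LinearMap.ker (f k).hom) hprev0.symm y).mpr hyy)
            exact ⟨x, by show pCast (P := P) hprev0 (g x) = y; rw [hx, pCast_symm_pCast]⟩
          · rintro ⟨x, rfl⟩
            show pCast (P := P) hprev0 (g x) ∈ _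
            rw [pCast_mem_iff (K := fun k => LinearMap.ker (f k).hom)]
            exact (hg2 (g x)).mpr ⟨x, rfl⟩
      | succ k' =>
        obtain ⟨g, hg1, hg2⟩ := mk_G (f (k'+1)) (hchain (k'+1) hk).2.1
          (LinearMap.ker (f k').hom) (e k' (by omega))
        refine ⟨g ≫ pCast (P := P) (hprevS k' (by omega)), fun _ => ⟨?_, ?_⟩⟩
        · intro x
          show pCast (P := P) (hprevS k' (by omega)) (g x) = 0 ↔ _
          rw [pCast_eq_zero_iff, hg1]
          exact Iff.rfl
        · intro y
          constructor
          · intro hyy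
            obtain ⟨x, hx⟩ := (hg2 (pCast (P := P) (hprevS k' (by omega)).symm y)).mp
              ((pCast_mem_iff (K := fun k => LinearMap.ker (f k).hom)
                (hprevS k' (by omega)).symm y).mpr hyy)
            exact ⟨x, by
              show pCast (P := P) (hprevS k' (by omega)) (g x) = y
              rw [hx, pCast_symm_pCast]⟩
          · rintro ⟨x, rfl⟩
            show pCast (P := P) (hprevS k' (by omega)) (g x) ∈ _
            rw [pCast_mem_iff (K := fun k => LinearMap.ker (f k).hom)]
            exact (hg2 (g x)).mpr ⟨x, rfl⟩
    · exact ⟨0, fun h => absurd h hk⟩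
  choose G hG using hGex
  refine gp_main m N P (fun k => LinearMap.ker (f k).hom) (fun k hk => (hchain k hk).1) G
    (fun k hk => (hG k hk).1) (fun k hk => (hG k hk).2) (f 0 ≫ iso0.hom) ?_ ?_
    (isoN ≪≫ e m (by omega)) hext
  · intro z
    obtain ⟨t, ht⟩ := (ModuleCat.epi_iff_surjective iso0.hom).mp inferInstance z
    obtain ⟨x, hx⟩ := (hchain 0 (by omega)).2.1 t
    exact ⟨x, by show iso0.hom (f 0 x) = z; rw [hx, ht]⟩
  · intro x
    show iso0.hom (f 0 x) = 0 ↔ f 0 x = 0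
    constructor
    · intro h
      apply (ModuleCat.mono_iff_injective iso0.hom).mp inferInstance
      rw [h, map_zero]
    · intro h
      rw [h, map_zero]
end CallerGP

/-- If `Ext^i(N, A) = 0` for `i = 1, …, n` and `Ω^n(N) ≅ N`, then `N` is
Gorenstein projective. -/
theorem stmt2 (K A : Type) [Field K] [Ring A] [Algebra K A] [FiniteDimensional K A]
    (N : ModuleCat.{0} A) (n : ℕ) (hn : 1 ≤ n)
    (hext : ∀ i, 1 ≤ i → i ≤ n → ¬ extNZ A N (ModuleCat.of A A) i)
    (hsyz : IsNthSyzygy A n N N) :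
    IsGorensteinProjective A N := by
  exact stmt2' N n hn hext hsyz
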